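/- arXiv:2502.03819 — 2 statements merged into one kernel-verified Lean document; each statement's English description precedes it below -/
import Mathlib

section
/- (Conditional stability.) Let d ≥ 1, let Ω ⊆ ℝ^d be a measurable set of finite Lebesgue measure |Ω|, let a > 0, p > 0, m > 0 and R > 0, let Y be a normed space, let D be a set of continuous integrable functions ℝ^d → ℂ, each with integrable Fourier transform and finite B^p norm, and let F : D → Y satisfy the lower link inequality m·‖u₁−u₂‖_{B^{−a}} ≤ ‖F(u₁)−F(u₂)‖_Y for all u₁, u₂ ∈ D. Fix a reference element u* ∈ D. Then there exists a constant C < ∞ (depending only on m, R, a, p, |Ω|) such that for all u₁, u₂ ∈ D with ‖u₁−u*‖_{B^p} ≤ R and ‖u₂−u*‖_{B^p} ≤ R, one has ‖u₁−u₂‖_{L²(Ω)} ≤ C · ‖F(u₁)−F(u₂)‖_Y^{p/(p+a)}. -/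
open MeasureTheory
open scoped FourierTransform RealInnerProductSpace

section aux
variable {V : Type*} [NormedAddCommGroup V] [InnerProductSpace ℝ V]
  [MeasurableSpace V] [BorelSpace V] [FiniteDimensional ℝ V]

lemma my_fourier_sub {f g : V → ℂ} (hf : Integrable f) (hg : Integrable g) :
    𝓕 (fun x => f x - g x) = fun ξ => 𝓕 f ξ - 𝓕 g ξ := by
  funext ξ
  have h1 := (Real.fourierIntegral_convergent_iff (f := f) ξ).2 hf
  have h2 := (Real.fourierIntegral_convergent_iff (f := g) ξ).2 hg
  simp only [Real.fourier_eq, smul_sub]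
  exact integral_sub h1 h2

lemma my_fourier_cont {f : V → ℂ} (hf : Integrable f) : Continuous (𝓕 f) :=
  VectorFourier.fourierIntegral_continuous Real.continuous_fourierChar
    (by exact continuous_inner) hf

lemma my_norm_finv_le (f : V → ℂ) (v : V) : ‖𝓕⁻ f v‖ ≤ ∫ x, ‖f x‖ :=
  VectorFourier.norm_fourierIntegral_le_integral_norm _ _ _ _ _

lemma my_sq_rpow_half {x : ℝ} (hx : 0 ≤ x) : (x ^ 2) ^ ((1:ℝ)/2) = x := by
  rw [← Real.rpow_natCast x 2, ← Real.rpow_mul hx]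
  norm_num
end aux

/-- **Conditional stability.** Suppose `F : D → Y` satisfies the lower link
inequality `m·‖u₁-u₂‖_{B^{-a}} ≤ ‖F u₁ - F u₂‖_Y` on a class `D` of continuous
integrable functions with integrable Fourier transform and finite `B^p` norm.
Then there is a constant `C` (depending only on `m, R, a, p, |Ω|`) such that
for all `u₁, u₂ ∈ D` in the ball `M(R) = {u : ‖u - u*‖_{B^p} ≤ R}` around a
reference element `u* ∈ D`,
`‖u₁ - u₂‖_{L²(Ω)} ≤ C·‖F u₁ - F u₂‖_Y^{p/(p+a)}`. -/
theorem conditional_stability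
    (d : ℕ) (hd : 1 ≤ d)
    (Ω : Set (EuclideanSpace ℝ (Fin d))) (hΩ : MeasurableSet Ω)
    (hΩfin : volume Ω < ⊤)
    (a p m R : ℝ) (ha : 0 < a) (hp : 0 < p) (hm : 0 < m) (hR : 0 < R)
    (Y : Type*) [NormedAddCommGroup Y] [NormedSpace ℝ Y]
    (D : Set (EuclideanSpace ℝ (Fin d) → ℂ))
    (hD : ∀ u ∈ D, Continuous u ∧ Integrable u ∧ Integrable (𝓕 u) ∧
      Integrable (fun ξ : EuclideanSpace ℝ (Fin d) =>
        (1 + ‖ξ‖ ^ 2) ^ (p / 2) * ‖𝓕 u ξ‖))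
    (F : (EuclideanSpace ℝ (Fin d) → ℂ) → Y)
    (hlink : ∀ u₁ ∈ D, ∀ u₂ ∈ D,
      m * (∫ ξ : EuclideanSpace ℝ (Fin d),
            (1 + ‖ξ‖ ^ 2) ^ (-(a / 2)) * ‖𝓕 (fun x => u₁ x - u₂ x) ξ‖)
        ≤ ‖F u₁ - F u₂‖)
    (ustar : EuclideanSpace ℝ (Fin d) → ℂ) (hustar : ustar ∈ D) :
    ∃ C : ℝ, ∀ u₁ ∈ D, ∀ u₂ ∈ D,
      (∫ ξ : EuclideanSpace ℝ (Fin d),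
          (1 + ‖ξ‖ ^ 2) ^ (p / 2) * ‖𝓕 (fun x => u₁ x - ustar x) ξ‖) ≤ R →
      (∫ ξ : EuclideanSpace ℝ (Fin d),
          (1 + ‖ξ‖ ^ 2) ^ (p / 2) * ‖𝓕 (fun x => u₂ x - ustar x) ξ‖) ≤ R →
      (∫ x in Ω, ‖u₁ x - u₂ x‖ ^ 2) ^ ((1 : ℝ) / 2)
        ≤ C * ‖F u₁ - F u₂‖ ^ (p / (p + a)) := by
  set θ : ℝ := p / (p + a) with hθdef
  have hpa : 0 < p + a := by linarith
  have hθ0 : 0 < θ := div_pos hp hpa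
  have hθ1 : θ < 1 := by rw [hθdef, div_lt_one hpa]; linarith
  have hθ1' : 0 < 1 - θ := by linarith
  have hwpos : ∀ ξ : EuclideanSpace ℝ (Fin d), (0:ℝ) < 1 + ‖ξ‖ ^ 2 := by
    intro ξ; positivity
  have hwone : ∀ ξ : EuclideanSpace ℝ (Fin d), (1:ℝ) ≤ 1 + ‖ξ‖ ^ 2 := by
    intro ξ; nlinarith [sq_nonneg ‖ξ‖]
  refine ⟨(volume Ω).toReal ^ ((1:ℝ)/2) * ((2*R) ^ (1-θ) * (1/m) ^ θ), ?_⟩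
  intro u₁ hu₁ u₂ hu₂ hR₁ hR₂
  obtain ⟨hu₁c, hu₁i, hu₁f, hu₁B⟩ := hD u₁ hu₁
  obtain ⟨hu₂c, hu₂i, hu₂f, hu₂B⟩ := hD u₂ hu₂
  obtain ⟨husc, husi, husf, husB⟩ := hD ustar hustar
  set u : EuclideanSpace ℝ (Fin d) → ℂ := fun x => u₁ x - u₂ x with hu
  have hui : Integrable u := hu₁i.sub hu₂i
  have huc : Continuous u := hu₁c.sub hu₂c
  have hsub : 𝓕 u = fun ξ => 𝓕 u₁ ξ - 𝓕 u₂ ξ := my_fourier_sub hu₁i hu₂i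
  have hFui : Integrable (𝓕 u) := by rw [hsub]; exact hu₁f.sub hu₂f
  have hFuc : Continuous (𝓕 u) := by
    rw [hsub]; exact (my_fourier_cont hu₁i).sub (my_fourier_cont hu₂i)
  set X : EuclideanSpace ℝ (Fin d) → ℝ :=
    fun ξ => (1 + ‖ξ‖ ^ 2) ^ (-(a/2)) * ‖𝓕 u ξ‖ with hX
  set Z : EuclideanSpace ℝ (Fin d) → ℝ :=
    fun ξ => (1 + ‖ξ‖ ^ 2) ^ (p/2) * ‖𝓕 u ξ‖ with hZ
  have hwc : Continuous fun ξ : EuclideanSpace ℝ (Fin d) => (1:ℝ) + ‖ξ‖ ^ 2 :=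
    continuous_const.add (continuous_norm.pow 2)
  have hwrc : ∀ c : ℝ, Continuous fun ξ : EuclideanSpace ℝ (Fin d) => (1 + ‖ξ‖ ^ 2) ^ c := by
    intro c
    exact hwc.rpow_const fun ξ => Or.inl (hwpos ξ).ne'
  have hXnn : ∀ ξ, 0 ≤ X ξ := fun ξ =>
    mul_nonneg (Real.rpow_nonneg (hwpos ξ).le _) (norm_nonneg _)
  have hZnn : ∀ ξ, 0 ≤ Z ξ := fun ξ =>
    mul_nonneg (Real.rpow_nonneg (hwpos ξ).le _) (norm_nonneg _)
  have hXc : Continuous X := (hwrc _).mul hFuc.norm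
  have hZc : Continuous Z := (hwrc _).mul hFuc.norm
  have hXint : Integrable X := by
    refine Integrable.mono' hFui.norm hXc.aestronglyMeasurable (Filter.Eventually.of_forall fun ξ => ?_)
    rw [Real.norm_of_nonneg (hXnn ξ)]
    exact mul_le_of_le_one_left (norm_nonneg _)
      (Real.rpow_le_one_of_one_le_of_nonpos (hwone ξ) (by linarith))
  -- integrability of the B^p-weighted Fourier norm of a difference of elements with bounds
  have hBint : ∀ f g : EuclideanSpace ℝ (Fin d) → ℂ, Integrable f → Integrable g →
      Integrable (fun ξ : EuclideanSpace ℝ (Fin d) => (1 + ‖ξ‖ ^ 2) ^ (p / 2) * ‖𝓕 f ξ‖) →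
      Integrable (fun ξ : EuclideanSpace ℝ (Fin d) => (1 + ‖ξ‖ ^ 2) ^ (p / 2) * ‖𝓕 g ξ‖) →
      Integrable (fun ξ : EuclideanSpace ℝ (Fin d) =>
        (1 + ‖ξ‖ ^ 2) ^ (p / 2) * ‖𝓕 (fun x => f x - g x) ξ‖) := by
    intro f g hfi hgi hfB hgB
    simp only [my_fourier_sub hfi hgi]
    refine Integrable.mono' (hfB.add hgB)
      (((hwrc _).mul ((my_fourier_cont hfi).sub (my_fourier_cont hgi)).norm).aestronglyMeasurable)
      (Filter.Eventually.of_forall fun ξ => ?_)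
    have h1 : (0:ℝ) ≤ (1 + ‖ξ‖ ^ 2) ^ (p / 2) := Real.rpow_nonneg (hwpos ξ).le _
    rw [Real.norm_of_nonneg (mul_nonneg h1 (norm_nonneg _))]
    calc (1 + ‖ξ‖ ^ 2) ^ (p / 2) * ‖𝓕 f ξ - 𝓕 g ξ‖
        ≤ (1 + ‖ξ‖ ^ 2) ^ (p / 2) * (‖𝓕 f ξ‖ + ‖𝓕 g ξ‖) :=
          mul_le_mul_of_nonneg_left (norm_sub_le _ _) h1
      _ = (1 + ‖ξ‖ ^ 2) ^ (p / 2) * ‖𝓕 f ξ‖ + (1 + ‖ξ‖ ^ 2) ^ (p / 2) * ‖𝓕 g ξ‖ := by ring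
  have hZint : Integrable Z := hBint u₁ u₂ hu₁i hu₂i hu₁B hu₂B
  have hZ₁int := hBint u₁ ustar hu₁i husi hu₁B husB
  have hZ₂int := hBint u₂ ustar hu₂i husi hu₂B husB
  -- the B^p bound: ∫ Z ≤ 2R
  have hZle : ∫ ξ, Z ξ ≤ 2 * R := by
    have hpt : ∀ ξ, Z ξ ≤ (1 + ‖ξ‖ ^ 2) ^ (p / 2) * ‖𝓕 (fun x => u₁ x - ustar x) ξ‖
        + (1 + ‖ξ‖ ^ 2) ^ (p / 2) * ‖𝓕 (fun x => u₂ x - ustar x) ξ‖ := by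
      intro ξ
      have h1 : (0:ℝ) ≤ (1 + ‖ξ‖ ^ 2) ^ (p / 2) := Real.rpow_nonneg (hwpos ξ).le _
      have heq : 𝓕 u ξ = 𝓕 (fun x => u₁ x - ustar x) ξ - 𝓕 (fun x => u₂ x - ustar x) ξ := by
        rw [hsub, my_fourier_sub hu₁i husi, my_fourier_sub hu₂i husi]
        ring
      calc Z ξ = (1 + ‖ξ‖ ^ 2) ^ (p / 2) * ‖𝓕 u ξ‖ := rfl
        _ ≤ (1 + ‖ξ‖ ^ 2) ^ (p / 2) *
            (‖𝓕 (fun x => u₁ x - ustar x) ξ‖ + ‖𝓕 (fun x => u₂ x - ustar x) ξ‖) := by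
          rw [heq]; exact mul_le_mul_of_nonneg_left (norm_sub_le _ _) h1
        _ = _ := by ring
    calc ∫ ξ, Z ξ
        ≤ ∫ ξ, ((1 + ‖ξ‖ ^ 2) ^ (p / 2) * ‖𝓕 (fun x => u₁ x - ustar x) ξ‖
            + (1 + ‖ξ‖ ^ 2) ^ (p / 2) * ‖𝓕 (fun x => u₂ x - ustar x) ξ‖) :=
          integral_mono hZint (hZ₁int.add hZ₂int) hpt
      _ = (∫ ξ, (1 + ‖ξ‖ ^ 2) ^ (p / 2) * ‖𝓕 (fun x => u₁ x - ustar x) ξ‖)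
            + ∫ ξ, (1 + ‖ξ‖ ^ 2) ^ (p / 2) * ‖𝓕 (fun x => u₂ x - ustar x) ξ‖ :=
          integral_add hZ₁int hZ₂int
      _ ≤ R + R := add_le_add hR₁ hR₂
      _ = 2 * R := by ring
  -- the link bound: ∫ X ≤ ‖F u₁ - F u₂‖ / m
  set N : ℝ := ‖F u₁ - F u₂‖ with hN
  have hNnn : 0 ≤ N := norm_nonneg _
  have hXle : ∫ ξ, X ξ ≤ N / m := by
    rw [le_div_iff₀ hm, mul_comm]
    exact hlink u₁ hu₁ u₂ hu₂
  have hXinn : 0 ≤ ∫ ξ, X ξ := integral_nonneg hXnn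
  have hZinn : 0 ≤ ∫ ξ, Z ξ := integral_nonneg hZnn
  -- Hölder interpolation
  have hconj : Real.HolderConjugate (1/θ) (1/(1-θ)) := by
    rw [Real.holderConjugate_iff]
    constructor
    · rw [lt_div_iff₀ hθ0]; linarith
    · rw [one_div, one_div, inv_inv, inv_inv]; ring
  have hfactor : ∀ ξ, X ξ ^ θ * Z ξ ^ (1-θ) = ‖𝓕 u ξ‖ := by
    intro ξ
    have hw := (hwpos ξ).le
    have hn : (0:ℝ) ≤ ‖𝓕 u ξ‖ := norm_nonneg _
    have hexp : -(a/2) * θ + (p/2) * (1-θ) = 0 := by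
      rw [hθdef]; field_simp; ring
    rw [hX, hZ]
    rw [Real.mul_rpow (Real.rpow_nonneg hw _) hn, Real.mul_rpow (Real.rpow_nonneg hw _) hn,
      ← Real.rpow_mul hw, ← Real.rpow_mul hw, mul_mul_mul_comm,
      ← Real.rpow_add (hwpos ξ), ← Real.rpow_add' hn (by norm_num), hexp]
    norm_num
  have hholder : ∫ ξ, ‖𝓕 u ξ‖ ≤ (∫ ξ, X ξ) ^ θ * (∫ ξ, Z ξ) ^ (1-θ) := by
    have hXm : MemLp (fun ξ => X ξ ^ θ) (ENNReal.ofReal (1/θ)) volume := by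
      have h := (memLp_one_iff_integrable.2 hXint).norm_rpow_div (ENNReal.ofReal θ)
      rw [ENNReal.toReal_ofReal hθ0.le] at h
      have heq : (fun ξ => ‖X ξ‖ ^ θ) = fun ξ => X ξ ^ θ := by
        funext ξ; rw [Real.norm_of_nonneg (hXnn ξ)]
      rw [heq] at h
      convert h using 2
      rw [ENNReal.ofReal_div_of_pos hθ0, ENNReal.ofReal_one]
    have hZm : MemLp (fun ξ => Z ξ ^ (1-θ)) (ENNReal.ofReal (1/(1-θ))) volume := by
      have h := (memLp_one_iff_integrable.2 hZint).norm_rpow_div (ENNReal.ofReal (1-θ))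
      rw [ENNReal.toReal_ofReal hθ1'.le] at h
      have heq : (fun ξ => ‖Z ξ‖ ^ (1-θ)) = fun ξ => Z ξ ^ (1-θ) := by
        funext ξ; rw [Real.norm_of_nonneg (hZnn ξ)]
      rw [heq] at h
      convert h using 2
      rw [ENNReal.ofReal_div_of_pos hθ1', ENNReal.ofReal_one]
    have h := integral_mul_le_Lp_mul_Lq_of_nonneg hconj
      (Filter.Eventually.of_forall fun ξ => Real.rpow_nonneg (hXnn ξ) θ)
      (Filter.Eventually.of_forall fun ξ => Real.rpow_nonneg (hZnn ξ) (1-θ)) hXm hZm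
    simp only [hfactor] at h
    have e1 : ∀ ξ, (X ξ ^ θ) ^ (1/θ) = X ξ := by
      intro ξ
      rw [← Real.rpow_mul (hXnn ξ), mul_one_div_cancel hθ0.ne', Real.rpow_one]
    have e2 : ∀ ξ, (Z ξ ^ (1-θ)) ^ (1/(1-θ)) = Z ξ := by
      intro ξ
      rw [← Real.rpow_mul (hZnn ξ), mul_one_div_cancel hθ1'.ne', Real.rpow_one]
    simp only [e1, e2, one_div_one_div] at h
    exact h
  -- combine spectral bounds
  have hK : ∫ ξ, ‖𝓕 u ξ‖ ≤ (N/m) ^ θ * (2*R) ^ (1-θ) := by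
    refine hholder.trans (mul_le_mul (Real.rpow_le_rpow hXinn hXle hθ0.le)
      (Real.rpow_le_rpow hZinn hZle hθ1'.le) (Real.rpow_nonneg hZinn _)
      (Real.rpow_nonneg (div_nonneg hNnn hm.le) _))
  set K : ℝ := ∫ ξ, ‖𝓕 u ξ‖ with hKdef
  have hKnn : 0 ≤ K := integral_nonneg fun ξ => norm_nonneg _
  -- pointwise bound via Fourier inversion
  have hpoint : ∀ x, ‖u x‖ ≤ K := by
    intro x
    have hinv : 𝓕⁻ (𝓕 u) x = u x :=
      MeasureTheory.Integrable.fourierInv_fourier_eq hui hFui huc.continuousAt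
    rw [← hinv]
    exact my_norm_finv_le _ x
  -- L² bound
  have hL2 : (∫ x in Ω, ‖u x‖ ^ 2) ≤ K ^ 2 * (volume Ω).toReal := by
    have hconst : IntegrableOn (fun _ : EuclideanSpace ℝ (Fin d) => K ^ 2) Ω :=
      integrableOn_const hΩfin.ne
    have hInt : IntegrableOn (fun x => ‖u x‖ ^ 2) Ω := by
      refine Integrable.mono' hconst (huc.norm.pow 2).aestronglyMeasurable.restrict
        (Filter.Eventually.of_forall fun x => ?_)
      rw [Real.norm_of_nonneg (by positivity)]
      exact pow_le_pow_left₀ (norm_nonneg _) (hpoint x) 2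
    calc (∫ x in Ω, ‖u x‖ ^ 2)
        ≤ ∫ _ in Ω, K ^ 2 :=
          integral_mono hInt hconst fun x => pow_le_pow_left₀ (norm_nonneg _) (hpoint x) 2
      _ = (volume Ω).toReal • K ^ 2 := setIntegral_const _
      _ = K ^ 2 * (volume Ω).toReal := by rw [smul_eq_mul]; ring
  -- final chain
  have hInn : 0 ≤ ∫ x in Ω, ‖u x‖ ^ 2 := integral_nonneg fun x => by positivity
  have hVnn : (0:ℝ) ≤ (volume Ω).toReal := ENNReal.toReal_nonneg
  calc (∫ x in Ω, ‖u x‖ ^ 2) ^ ((1:ℝ)/2)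
      ≤ (K ^ 2 * (volume Ω).toReal) ^ ((1:ℝ)/2) :=
        Real.rpow_le_rpow hInn hL2 (by norm_num)
    _ = K * (volume Ω).toReal ^ ((1:ℝ)/2) := by
        rw [Real.mul_rpow (by positivity) hVnn, my_sq_rpow_half hKnn]
    _ ≤ ((N/m) ^ θ * (2*R) ^ (1-θ)) * (volume Ω).toReal ^ ((1:ℝ)/2) :=
        mul_le_mul_of_nonneg_right hK (Real.rpow_nonneg hVnn _)
    _ = (volume Ω).toReal ^ ((1:ℝ)/2) * ((2*R) ^ (1-θ) * (1/m) ^ θ) * N ^ θ := by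
        rw [div_eq_mul_one_div, Real.mul_rpow hNnn (by positivity)]
        ring
end

section
/- (Monte Carlo approximation bound.) Let d ≥ 1, let Ω ⊆ ℝ^d be measurable with finite Lebesgue measure |Ω|, let (G, μ_G) be a measure space, w : G → (0,∞) measurable, g : ℝ^d × G → ℝ measurable with sup_{x∈Ω} |g(x,θ)| ≤ C_s·w(θ) for all θ ∈ G. Let ρ : G → ℝ be measurable with N := ∫_G w|ρ| dμ_G satisfying 0 < N < ∞, and set u(x) := ∫_G g(x,θ)ρ(θ) dμ_G(θ) for x ∈ Ω. Let μ be the probability measure on G with dμ = (w|ρ|/N) dμ_G. Let (Ω₀, P) be a probability space and θ₁, …, θ_n : Ω₀ → G independent random variables each with law μ, and define the random function u_n(x) := (N/n) · Σ_{i=1}^n (g(x, θ_i)/w(θ_i)) · sgn(ρ(θ_i)). Then E_P[ ‖u − u_n‖²_{L²(Ω)} ] ≤ |Ω| · C_s² · N² / n; in particular (E_P ‖u−u_n‖²_{L²(Ω)})^{1/2} ≤ C_s · N · √(|Ω|/n). -/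
open MeasureTheory ProbabilityTheory

/-- **Monte Carlo approximation bound.** Let `u = T_g ρ` for a kernel `g` with
`sup_{x∈Ω}|g(x,θ)| ≤ C_s·w(θ)` and a density `ρ` with
`N = ∫_G w|ρ| dμ_G ∈ (0,∞)`. If `θ₁, …, θ_n` are i.i.d. samples from the
probability measure `dμ = (w|ρ|/N) dμ_G` and
`u_n(x) = (N/n)·∑ᵢ (g(x,θᵢ)/w(θᵢ))·sgn(ρ(θᵢ))`, then
`E[‖u - u_n‖²_{L²(Ω)}] ≤ |Ω|·C_s²·N²/n`. -/
theorem monte_carlo_bound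
    (d : ℕ) (hd : 1 ≤ d)
    (Ω : Set (EuclideanSpace ℝ (Fin d))) (hΩ : MeasurableSet Ω)
    (hΩfin : volume Ω < ⊤)
    (G : Type*) [MeasurableSpace G] (μG : Measure G)
    (w : G → ℝ) (hw_pos : ∀ θ, 0 < w θ) (hw_meas : Measurable w)
    (g : EuclideanSpace ℝ (Fin d) → G → ℝ)
    (hg_meas : Measurable (Function.uncurry g))
    (Cs : ℝ) (hCs : 0 < Cs)
    (hg_bound : ∀ θ : G, ∀ x ∈ Ω, |g x θ| ≤ Cs * w θ)
    (ρ : G → ℝ) (hρ_meas : Measurable ρ)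
    (hρ_int : Integrable (fun θ => w θ * |ρ θ|) μG)
    (N : ℝ) (hN : N = ∫ θ, w θ * |ρ θ| ∂μG) (hNpos : 0 < N)
    (u : EuclideanSpace ℝ (Fin d) → ℝ)
    (hu : ∀ x ∈ Ω, u x = ∫ θ, g x θ * ρ θ ∂μG)
    (μ : Measure G)
    (hμ : μ = μG.withDensity (fun θ => ENNReal.ofReal (w θ * |ρ θ| / N)))
    (Ω₀ : Type*) [MeasurableSpace Ω₀] (P : Measure Ω₀) [IsProbabilityMeasure P]
    (n : ℕ) (hn : 1 ≤ n)
    (θv : Fin n → Ω₀ → G)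
    (hθ_meas : ∀ i, Measurable (θv i))
    (hθ_indep : iIndepFun θv P)
    (hθ_law : ∀ i, Measure.map (θv i) P = μ) :
    (∫ ω, (∫ x in Ω,
        (u x - (N / n) * ∑ i : Fin n,
          (g x (θv i ω) / w (θv i ω)) * Real.sign (ρ (θv i ω))) ^ 2) ∂P)
      ≤ (volume Ω).toReal * Cs ^ 2 * N ^ 2 / n := by
  classical
  have hn0 : (0 : ℝ) < (n : ℝ) := by exact_mod_cast hn
  have hn0' : (n : ℝ) ≠ 0 := hn0.ne'
  -- the kernel used in the Monte Carlo estimator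
  set F : EuclideanSpace ℝ (Fin d) → G → ℝ :=
    fun x t => N * ((g x t / w t) * Real.sign (ρ t)) with hFdef
  -- measurability of the sign function
  have hsign : Measurable fun t : G => Real.sign (ρ t) := by
    have h : (fun t : G => Real.sign (ρ t))
        = fun t => if ρ t < 0 then (-1 : ℝ) else if 0 < ρ t then 1 else 0 := by
      funext t; rw [Real.sign]
    rw [h]
    exact Measurable.ite (measurableSet_lt hρ_meas measurable_const)
      measurable_const (Measurable.ite (measurableSet_lt measurable_const hρ_meas)
        measurable_const measurable_const)
  have habs_sign : ∀ r : ℝ, |Real.sign r| ≤ 1 := by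
    intro r
    rcases Real.sign_apply_eq r with h | h | h <;> rw [h] <;> norm_num
  have hsign_mul_abs : ∀ r : ℝ, Real.sign r * |r| = r := by
    intro r
    rcases lt_trichotomy r 0 with h | h | h
    · rw [Real.sign_of_neg h, abs_of_neg h]; ring
    · simp [h]
    · rw [Real.sign_of_pos h, abs_of_pos h]; ring
  have hF_meas : Measurable (Function.uncurry F) := by
    have h : Function.uncurry F = fun p : (EuclideanSpace ℝ (Fin d)) × G =>
        N * ((g p.1 p.2 / w p.2) * Real.sign (ρ p.2)) := rfl
    rw [h]
    exact measurable_const.mul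
      ((hg_meas.div (hw_meas.comp measurable_snd)).mul (hsign.comp measurable_snd))
  have hFx_meas : ∀ x, Measurable (F x) :=
    fun x => hF_meas.comp measurable_prodMk_left
  -- bound on the estimator kernel
  have hgw : ∀ x ∈ Ω, ∀ t, |(g x t / w t) * Real.sign (ρ t)| ≤ Cs := by
    intro x hx t
    have hwt := hw_pos t
    have h1 : |g x t / w t| ≤ Cs := by
      rw [abs_div, abs_of_pos hwt, div_le_iff₀ hwt]
      exact hg_bound t x hx
    calc |(g x t / w t) * Real.sign (ρ t)| = |g x t / w t| * |Real.sign (ρ t)| := abs_mul _ _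
      _ ≤ Cs * 1 := mul_le_mul h1 (habs_sign _) (abs_nonneg _) hCs.le
      _ = Cs := mul_one _
  have hF_bound : ∀ x ∈ Ω, ∀ t, |F x t| ≤ N * Cs := by
    intro x hx t
    calc |F x t| = |N| * |(g x t / w t) * Real.sign (ρ t)| := abs_mul _ _
      _ ≤ |N| * Cs := mul_le_mul_of_nonneg_left (hgw x hx t) (abs_nonneg _)
      _ = N * Cs := by rw [abs_of_pos hNpos]
  -- μ is a probability measure
  haveI hμprob : IsProbabilityMeasure μ := by
    rw [← hθ_law ⟨0, hn⟩]
    exact Measure.isProbabilityMeasure_map (hθ_meas _).aemeasurable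
  -- the mean of F x under μ is the integral ∫ g x θ ρ θ dμG
  have hμint : ∀ x, ∫ t, F x t ∂μ = ∫ t, g x t * ρ t ∂μG := by
    intro x
    have hδmeas : Measurable fun t => (w t * |ρ t| / N).toNNReal :=
      ((hw_meas.mul hρ_meas.abs).div_const N).real_toNNReal
    have hcoe : (fun t => ENNReal.ofReal (w t * |ρ t| / N))
        = fun t => ((w t * |ρ t| / N).toNNReal : ENNReal) := rfl
    rw [hμ, hcoe, integral_withDensity_eq_integral_smul hδmeas]
    refine integral_congr_ae (ae_of_all _ fun t => ?_)
    have hwt : w t ≠ 0 := (hw_pos t).ne'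
    have hNne : N ≠ 0 := hNpos.ne'
    have hnn : 0 ≤ w t * |ρ t| / N := div_nonneg (mul_nonneg (hw_pos t).le (abs_nonneg _)) hNpos.le
    show (w t * |ρ t| / N).toNNReal • F x t = g x t * ρ t
    rw [NNReal.smul_def, Real.coe_toNNReal _ hnn, smul_eq_mul]
    have hkey : (w t * |ρ t| / N) * F x t = g x t * (Real.sign (ρ t) * |ρ t|) := by
      rw [hFdef]; field_simp
    rw [hkey, hsign_mul_abs]
  -- the measurable representative of u on Ω
  set v : EuclideanSpace ℝ (Fin d) → ℝ := fun x => ∫ t, F x t ∂μ with hvdef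
  have hv_meas : Measurable v :=
    (hF_meas.stronglyMeasurable.integral_prod_right' (ν := μ)).measurable
  have hv_ueq : ∀ x ∈ Ω, u x = v x := by
    intro x hx
    simp only [hvdef]
    exact (hu x hx).trans (hμint x).symm
  have hv_bound : ∀ x ∈ Ω, |v x| ≤ N * Cs := by
    intro x hx
    have h := norm_integral_le_of_norm_le_const (μ := μ) (C := N * Cs)
      (f := F x) (ae_of_all _ fun t => by
        rw [Real.norm_eq_abs]; exact hF_bound x hx t)
    simpa [measure_univ] using h
  -- key pointwise-in-x second moment bound
  have key : ∀ x ∈ Ω, (∫ ω, (v x - (N / n) * ∑ i : Fin n,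
        (g x (θv i ω) / w (θv i ω)) * Real.sign (ρ (θv i ω))) ^ 2 ∂P)
      ≤ N ^ 2 * Cs ^ 2 / n := by
    intro x hx
    set Z : Fin n → Ω₀ → ℝ := fun i ω => F x (θv i ω) with hZdef
    have hZmeas : ∀ i, Measurable (Z i) := fun i => (hFx_meas x).comp (hθ_meas i)
    have hZbd : ∀ i ω, |Z i ω| ≤ N * Cs := fun i ω => hF_bound x hx _
    have hZmem : ∀ i, MemLp (Z i) 2 P := fun i =>
      MemLp.of_bound (hZmeas i).aestronglyMeasurable (N * Cs)
        (ae_of_all _ fun ω => by rw [Real.norm_eq_abs]; exact hZbd i ω)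
    have hZint : ∀ i, Integrable (Z i) P := fun i => (hZmem i).integrable (by norm_num)
    have hZmean : ∀ i, ∫ ω, Z i ω ∂P = v x := by
      intro i
      have h : ∫ ω, F x (θv i ω) ∂P = ∫ t, F x t ∂(Measure.map (θv i) P) :=
        (integral_map (hθ_meas i).aemeasurable (hFx_meas x).aestronglyMeasurable).symm
      simp only [hZdef]
      rw [h, hθ_law i]
    set S : Ω₀ → ℝ := ∑ i : Fin n, Z i with hSdef
    have hSapp : ∀ ω, S ω = ∑ i : Fin n, Z i ω := by
      intro ω; simp only [hSdef, Finset.sum_apply]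
    have hSmem : MemLp S 2 P := memLp_finset_sum' _ (fun i _ => hZmem i)
    set X : Ω₀ → ℝ := ((n : ℝ)⁻¹) • S with hXdef
    have hXmem : MemLp X 2 P := hSmem.const_smul _
    have hXapp : ∀ ω, X ω = ((n : ℝ)⁻¹) * S ω := fun ω => rfl
    have hSint : ∫ ω, S ω ∂P = (n : ℝ) * v x := by
      have h : ∫ ω, S ω ∂P = ∑ i : Fin n, ∫ ω, Z i ω ∂P := by
        simp only [hSapp]
        exact integral_finset_sum _ (fun i _ => hZint i)
      rw [h]
      simp [hZmean, Finset.sum_const, Finset.card_univ, nsmul_eq_mul]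
    have hXint : ∫ ω, X ω ∂P = v x := by
      simp only [hXapp]
      rw [integral_const_mul, hSint, inv_mul_cancel_left₀ hn0']
    have hpt : ∀ ω, X ω = (N / ↑n) * ∑ i : Fin n,
        (g x (θv i ω) / w (θv i ω)) * Real.sign (ρ (θv i ω)) := by
      intro ω
      rw [hXapp, hSapp]
      simp only [hZdef, hFdef]
      rw [← Finset.mul_sum]
      ring
    have hindep : Set.Pairwise ↑(Finset.univ : Finset (Fin n))
        (fun i j => IndepFun (Z i) (Z j) P) := by
      intro i _ j _ hij
      exact (hθ_indep.indepFun hij).comp (hFx_meas x) (hFx_meas x)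
    have hvarS : variance S P = ∑ i : Fin n, variance (Z i) P :=
      IndepFun.variance_sum (fun i _ => hZmem i) hindep
    have hvarZ : ∀ i, variance (Z i) P ≤ (N * Cs) ^ 2 := by
      intro i
      rw [variance_eq_sub (hZmem i)]
      have h2 : (∫ ω, Z i ω ^ 2 ∂P) ≤ (N * Cs) ^ 2 := by
        have hle : ∀ ω, Z i ω ^ 2 ≤ (N * Cs) ^ 2 := by
          intro ω
          have h := abs_le.mp (hZbd i ω)
          exact sq_le_sq' (by linarith [h.1]) h.2
        calc (∫ ω, Z i ω ^ 2 ∂P) ≤ ∫ _ω, (N * Cs) ^ 2 ∂P :=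
            integral_mono ((hZmem i).integrable_sq) (integrable_const _) hle
          _ = (N * Cs) ^ 2 := by simp
      have h3 : (0:ℝ) ≤ (∫ ω, Z i ω ∂P) ^ 2 := sq_nonneg _
      calc (∫ ω, (Z i ^ 2) ω ∂P) - (∫ ω, Z i ω ∂P) ^ 2
          ≤ ∫ ω, (Z i ^ 2) ω ∂P := by linarith
        _ = ∫ ω, Z i ω ^ 2 ∂P := rfl
        _ ≤ (N * Cs) ^ 2 := h2
    calc (∫ ω, (v x - (N / n) * ∑ i : Fin n,
          (g x (θv i ω) / w (θv i ω)) * Real.sign (ρ (θv i ω))) ^ 2 ∂P)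
        = variance X P := by
          rw [variance_eq_integral hXmem.aemeasurable]
          refine integral_congr_ae (ae_of_all _ fun ω => ?_)
          simp only [Pi.pow_apply, Pi.sub_apply]
          rw [← hpt ω, hXint]
          ring
      _ = ((n : ℝ)⁻¹) ^ 2 * variance S P := variance_smul _ _ _
      _ = ((n : ℝ)⁻¹) ^ 2 * ∑ i : Fin n, variance (Z i) P := by rw [hvarS]
      _ ≤ ((n : ℝ)⁻¹) ^ 2 * ((n : ℝ) * (N * Cs) ^ 2) := by
          refine mul_le_mul_of_nonneg_left ?_ (by positivity)
          calc (∑ i : Fin n, variance (Z i) P) ≤ ∑ _i : Fin n, (N * Cs) ^ 2 :=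
              Finset.sum_le_sum fun i _ => hvarZ i
            _ = (n : ℝ) * (N * Cs) ^ 2 := by
              simp [Finset.sum_const, Finset.card_univ, nsmul_eq_mul]
      _ = N ^ 2 * Cs ^ 2 / n := by field_simp
  -- measurability of the joint integrand
  have hterm : ∀ i : Fin n, Measurable (fun p : Ω₀ × EuclideanSpace ℝ (Fin d) =>
      (g p.2 (θv i p.1) / w (θv i p.1)) * Real.sign (ρ (θv i p.1))) := by
    intro i
    have hθc : Measurable fun p : Ω₀ × EuclideanSpace ℝ (Fin d) => θv i p.1 :=
      (hθ_meas i).comp measurable_fst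
    have hgm : Measurable fun p : Ω₀ × EuclideanSpace ℝ (Fin d) => g p.2 (θv i p.1) :=
      hg_meas.comp (measurable_snd.prodMk hθc)
    exact (hgm.div (hw_meas.comp hθc)).mul (hsign.comp hθc)
  have hH_meas : Measurable (fun p : Ω₀ × EuclideanSpace ℝ (Fin d) =>
      (v p.2 - (N / ↑n) * ∑ i : Fin n,
        (g p.2 (θv i p.1) / w (θv i p.1)) * Real.sign (ρ (θv i p.1))) ^ 2) := by
    apply Measurable.pow_const
    exact (hv_meas.comp measurable_snd).sub
      (measurable_const.mul (Finset.measurable_sum _ fun i _ => hterm i))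
  -- bound on the estimator term
  have hAle : ∀ ω, ∀ x ∈ Ω, |(N / ↑n) * ∑ i : Fin n,
      (g x (θv i ω) / w (θv i ω)) * Real.sign (ρ (θv i ω))| ≤ N * Cs := by
    intro ω x hx
    rw [abs_mul, abs_of_pos (div_pos hNpos hn0)]
    have hsum : |∑ i : Fin n, (g x (θv i ω) / w (θv i ω)) * Real.sign (ρ (θv i ω))|
        ≤ (n : ℝ) * Cs := by
      calc |∑ i : Fin n, (g x (θv i ω) / w (θv i ω)) * Real.sign (ρ (θv i ω))|
          ≤ ∑ i : Fin n, |(g x (θv i ω) / w (θv i ω)) * Real.sign (ρ (θv i ω))| :=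
            Finset.abs_sum_le_sum_abs _ _
        _ ≤ ∑ _i : Fin n, Cs := Finset.sum_le_sum fun i _ => hgw x hx _
        _ = (n : ℝ) * Cs := by
            simp [Finset.sum_const, Finset.card_univ, nsmul_eq_mul]
    calc N / ↑n * |∑ i : Fin n, (g x (θv i ω) / w (θv i ω)) * Real.sign (ρ (θv i ω))|
        ≤ N / ↑n * ((n : ℝ) * Cs) :=
          mul_le_mul_of_nonneg_left hsum (div_pos hNpos hn0).le
      _ = N * Cs := by field_simp
  haveI hfin : IsFiniteMeasure (volume.restrict Ω) :=
    ⟨by rwa [Measure.restrict_apply_univ]⟩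
  have haemem : ∀ᵐ p ∂(P.prod (volume.restrict Ω)), p.2 ∈ Ω := by
    rw [ae_iff]
    have hset : {p : Ω₀ × EuclideanSpace ℝ (Fin d) | ¬ p.2 ∈ Ω} = Set.univ ×ˢ Ωᶜ := by
      ext p; simp [Set.mem_prod]
    rw [hset, Measure.prod_prod, Measure.restrict_apply hΩ.compl]
    simp
  have hH_int : Integrable (Function.uncurry fun (ω : Ω₀) (x : EuclideanSpace ℝ (Fin d)) =>
      (v x - (N / ↑n) * ∑ i : Fin n,
        (g x (θv i ω) / w (θv i ω)) * Real.sign (ρ (θv i ω))) ^ 2)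
      (P.prod (volume.restrict Ω)) := by
    refine Integrable.mono' (integrable_const ((2 * (N * Cs)) ^ 2))
      hH_meas.aestronglyMeasurable ?_
    filter_upwards [haemem] with p hp
    rw [Real.norm_eq_abs, abs_of_nonneg (sq_nonneg _)]
    have h1 : |v p.2 - (N / ↑n) * ∑ i : Fin n,
        (g p.2 (θv i p.1) / w (θv i p.1)) * Real.sign (ρ (θv i p.1))| ≤ 2 * (N * Cs) := by
      calc |v p.2 - (N / ↑n) * ∑ i : Fin n,
            (g p.2 (θv i p.1) / w (θv i p.1)) * Real.sign (ρ (θv i p.1))|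
          ≤ |v p.2| + |(N / ↑n) * ∑ i : Fin n,
            (g p.2 (θv i p.1) / w (θv i p.1)) * Real.sign (ρ (θv i p.1))| := abs_sub _ _
        _ ≤ N * Cs + N * Cs := add_le_add (hv_bound _ hp) (hAle p.1 p.2 hp)
        _ = 2 * (N * Cs) := by ring
    have h2 := abs_le.mp h1
    exact sq_le_sq' (by linarith [h2.1]) h2.2
  have hswap : (∫ ω, (∫ x in Ω,
        (u x - (N / n) * ∑ i : Fin n,
          (g x (θv i ω) / w (θv i ω)) * Real.sign (ρ (θv i ω))) ^ 2) ∂P)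
      = ∫ x in Ω, (∫ ω, (v x - (N / n) * ∑ i : Fin n,
          (g x (θv i ω) / w (θv i ω)) * Real.sign (ρ (θv i ω))) ^ 2 ∂P) := by
    rw [← integral_integral_swap hH_int]
    refine integral_congr_ae (ae_of_all _ fun ω => ?_)
    refine setIntegral_congr_fun hΩ fun x hx => ?_
    rw [hv_ueq x hx]
  rw [hswap]
  have hInt1 : IntegrableOn (fun x => ∫ ω, (v x - (N / n) * ∑ i : Fin n,
      (g x (θv i ω) / w (θv i ω)) * Real.sign (ρ (θv i ω))) ^ 2 ∂P) Ω volume :=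
    hH_int.integral_prod_right
  calc (∫ x in Ω, (∫ ω, (v x - (N / n) * ∑ i : Fin n,
        (g x (θv i ω) / w (θv i ω)) * Real.sign (ρ (θv i ω))) ^ 2 ∂P))
      ≤ ∫ _x in Ω, (N ^ 2 * Cs ^ 2 / n) :=
        setIntegral_mono_on hInt1 (integrableOn_const hΩfin.ne) hΩ
          (fun x hx => key x hx)
    _ = (volume Ω).toReal * (N ^ 2 * Cs ^ 2 / n) := by
        rw [setIntegral_const, smul_eq_mul, measureReal_def]
    _ = (volume Ω).toReal * Cs ^ 2 * N ^ 2 / n := by ring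
end
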